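/- Let r and r₀ be real numbers with r ≥ 1/2 and r₀ ≥ 1. Define G̃¹ : ℕ³ → [0, ∞) by G̃¹(k, k₁, k₂) = χ[|k−k₂| ≤ 10]·2^{(1/2−r)k₁}·2^{(1−r₀)k} + χ[|k−k₁| ≤ 10]·2^{(1/2−r)k₂}·2^{(1−r₀)k} + χ[|k₁−k₂| ≤ 10]·2^{(1−2r)k₁}·2^{(r+1/2−r₀)k}, where χ[·] denotes the indicator of the stated condition. Then G̃¹ satisfies property (G). -/

import Mathlib

noncomputable section

open scoped ENNReal

/-- The condition that the two largest entries of the triple `(k, k₁, k₂)` differ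
by at most 10 (i.e. `max ≤ med + 10`). -/
def nearMax (k k₁ k₂ : ℕ) : Prop :=
  max k (max k₁ k₂) ≤ (k + k₁ + k₂ - max k (max k₁ k₂) - min k (min k₁ k₂)) + 10

instance : ∀ k k₁ k₂, Decidable (nearMax k k₁ k₂) := fun _ _ _ => Nat.decLe _ _

/-- Property (G): the trilinear summation bound for a weight `G : ℕ³ → [0,∞)`,
restricted to triples whose two largest entries differ by at most 10.
The sum is taken in `ℝ≥0∞` so that it is always well defined. -/
def propertyG (G : ℕ → ℕ → ℕ → ℝ) : Prop :=
  ∃ C : ℝ, ∀ a b c : ℕ → ℝ,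
    (∀ n, 0 ≤ a n) → (∀ n, 0 ≤ b n) → (∀ n, 0 ≤ c n) →
    Summable (fun n => (a n) ^ 2) → Summable (fun n => (b n) ^ 2) →
    Summable (fun n => (c n) ^ 2) →
    (∑' p : ℕ × ℕ × ℕ,
        if nearMax p.1 p.2.1 p.2.2 then
          ENNReal.ofReal (G p.1 p.2.1 p.2.2 * a p.1 * b p.2.1 * c p.2.2 /
            ((min p.1 (min p.2.1 p.2.2) : ℝ) + 1) ^ 10)
        else 0) ≤
      ENNReal.ofReal (C * Real.sqrt (∑' n, (a n) ^ 2) * Real.sqrt (∑' n, (b n) ^ 2) *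
        Real.sqrt (∑' n, (c n) ^ 2))

/-- The weight `G̃¹` from Proposition 4.4 (estimates for dyadic pieces, part 2). -/
def Gwt1 (r r₀ : ℝ) (k k₁ k₂ : ℕ) : ℝ :=
  (if |(k : ℤ) - (k₂ : ℤ)| ≤ 10 then
      (2 : ℝ) ^ ((1 / 2 - r) * (k₁ : ℝ)) * (2 : ℝ) ^ ((1 - r₀) * (k : ℝ)) else 0) +
  (if |(k : ℤ) - (k₁ : ℤ)| ≤ 10 then
      (2 : ℝ) ^ ((1 / 2 - r) * (k₂ : ℝ)) * (2 : ℝ) ^ ((1 - r₀) * (k : ℝ)) else 0) +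
  (if |(k₁ : ℤ) - (k₂ : ℤ)| ≤ 10 then
      (2 : ℝ) ^ ((1 - 2 * r) * (k₁ : ℝ)) * (2 : ℝ) ^ ((r + 1 / 2 - r₀) * (k : ℝ)) else 0)

/-! On triples whose two largest entries are within 10 of each other, `Gwt1 r r₀` is bounded by
`2 + 2 ^ (20 * max (r + 1/2 - r₀) 0)`: the exponents of the first two terms are nonpositive, and
in the third `k ≤ k₁ + 20`. Property (G) holds for every weight bounded on that region: the factor
`(min + 1)⁻¹⁰` goes to the sequence carrying the smallest index, where it is square summable, and
the two larger indices lie in a band of width 10, a kernel with row and column sums at most 21, so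
Cauchy–Schwarz and Schur's test bound the sum. -/

def l2Norm {ι : Type*} (f : ι → ℝ≥0∞) : ℝ≥0∞ := (∑' i, f i ^ (2 : ℝ)) ^ (1 / 2 : ℝ)

section L2

variable {ι κ : Type*}

theorem tsum_mul_le_l2Norm_mul (f g : ι → ℝ≥0∞) : ∑' i, f i * g i ≤ l2Norm f * l2Norm g := by
  rw [ENNReal.tsum_eq_iSup_sum]
  refine iSup_le fun s => (ENNReal.inner_le_Lp_mul_Lq s f g .two_two).trans ?_
  unfold l2Norm
  gcongr <;> exact ENNReal.sum_le_tsum s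

theorem l2Norm_ofReal (x : ι → ℝ) (hx : ∀ i, 0 ≤ x i) (hs : Summable fun i => x i ^ 2) :
    l2Norm (fun i => ENNReal.ofReal (x i)) = ENNReal.ofReal √(∑' i, x i ^ 2) := by
  have hsq (i : ι) : ENNReal.ofReal (x i) ^ (2 : ℝ) = ENNReal.ofReal (x i ^ 2) := by
    rw [ENNReal.ofReal_rpow_of_nonneg (hx i) zero_le_two, Real.rpow_two]
  rw [l2Norm, tsum_congr hsq, ← ENNReal.ofReal_tsum_of_nonneg (fun i => sq_nonneg _) hs,
    ENNReal.ofReal_rpow_of_nonneg (tsum_nonneg fun i => sq_nonneg _) one_half_pos.le,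
    ← Real.sqrt_eq_rpow]

theorem l2Norm_kernel_mul_le {K : ι → κ → ℝ≥0∞} {R : ℝ≥0∞} (hrow : ∀ i, ∑' j, K i j ≤ R)
    (f : ι → ℝ≥0∞) :
    l2Norm (fun q : ι × κ => K q.1 q.2 ^ (1 / 2 : ℝ) * f q.1) ≤ R ^ (1 / 2 : ℝ) * l2Norm f := by
  have hsq (q : ι × κ) :
      (K q.1 q.2 ^ (1 / 2 : ℝ) * f q.1) ^ (2 : ℝ) = K q.1 q.2 * f q.1 ^ (2 : ℝ) := by
    rw [ENNReal.mul_rpow_of_nonneg _ _ zero_le_two, ← ENNReal.rpow_mul]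
    norm_num
  calc l2Norm (fun q : ι × κ => K q.1 q.2 ^ (1 / 2 : ℝ) * f q.1)
      = (∑' i, (∑' j, K i j) * f i ^ (2 : ℝ)) ^ (1 / 2 : ℝ) := by
        simp only [l2Norm, hsq, ENNReal.tsum_prod', ENNReal.tsum_mul_right]
    _ ≤ (R * ∑' i, f i ^ (2 : ℝ)) ^ (1 / 2 : ℝ) := by
        rw [← ENNReal.tsum_mul_left]
        gcongr with i
        exact hrow i
    _ = R ^ (1 / 2 : ℝ) * l2Norm f := ENNReal.mul_rpow_of_nonneg _ _ one_half_pos.le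

theorem ENNReal.rpow_half_mul_rpow_half (x : ℝ≥0∞) : x ^ (1 / 2 : ℝ) * x ^ (1 / 2 : ℝ) = x := by
  rw [← ENNReal.rpow_add_of_nonneg _ _ one_half_pos.le one_half_pos.le]
  norm_num

theorem tsum_kernel_mul_le {K : ι → κ → ℝ≥0∞} {R : ℝ≥0∞} (hrow : ∀ i, ∑' j, K i j ≤ R)
    (hcol : ∀ j, ∑' i, K i j ≤ R) (f : ι → ℝ≥0∞) (g : κ → ℝ≥0∞) :
    ∑' q : ι × κ, K q.1 q.2 * f q.1 * g q.2 ≤ R * l2Norm f * l2Norm g := by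
  have hswap : l2Norm (fun q : ι × κ => K q.1 q.2 ^ (1 / 2 : ℝ) * g q.2) =
      l2Norm (fun q : κ × ι => K q.2 q.1 ^ (1 / 2 : ℝ) * g q.1) := by
    simp only [l2Norm]
    congr 1
    exact (Equiv.prodComm ι κ).tsum_eq
      fun q : κ × ι => (K q.2 q.1 ^ (1 / 2 : ℝ) * g q.1) ^ (2 : ℝ)
  calc ∑' q : ι × κ, K q.1 q.2 * f q.1 * g q.2
      = ∑' q : ι × κ, (K q.1 q.2 ^ (1 / 2 : ℝ) * f q.1) * (K q.1 q.2 ^ (1 / 2 : ℝ) * g q.2) := by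
        refine tsum_congr fun q => ?_
        rw [mul_mul_mul_comm, ENNReal.rpow_half_mul_rpow_half, mul_assoc]
    _ ≤ (R ^ (1 / 2 : ℝ) * l2Norm f) * (R ^ (1 / 2 : ℝ) * l2Norm g) := by
        refine (tsum_mul_le_l2Norm_mul _ _).trans ?_
        rw [hswap]
        exact mul_le_mul' (l2Norm_kernel_mul_le hrow f)
          (l2Norm_kernel_mul_le (K := fun j i => K i j) hcol g)
    _ = R * l2Norm f * l2Norm g := by
        rw [mul_mul_mul_comm, ENNReal.rpow_half_mul_rpow_half, mul_assoc]

end L2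

def nearInd (D i j : ℕ) : ℝ≥0∞ := if |(i : ℤ) - j| ≤ D then 1 else 0

theorem nearInd_comm (D i j : ℕ) : nearInd D i j = nearInd D j i := by
  simp only [nearInd, abs_sub_comm]

theorem tsum_nearInd_le (D i : ℕ) : ∑' j, nearInd D i j ≤ 2 * D + 1 := by
  have hout : ∀ j ∉ Finset.Icc (i - D) (i + D), nearInd D i j = 0 := by
    intro j hj
    rw [Finset.mem_Icc] at hj
    rw [nearInd, if_neg (by rw [abs_le]; omega)]
  rw [tsum_eq_sum hout]
  simp only [nearInd, Finset.sum_boole]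
  calc (((Finset.Icc (i - D) (i + D)).filter fun j : ℕ => |(i : ℤ) - j| ≤ D).card : ℝ≥0∞)
      ≤ (Finset.Icc (i - D) (i + D)).card := by gcongr; exact Finset.filter_subset _ _
    _ ≤ 2 * D + 1 := by
        rw [Nat.card_Icc]
        exact_mod_cast (by omega : i + D + 1 - (i - D) ≤ 2 * D + 1)

theorem tsum_nearInd_mul_le (D : ℕ) (f g : ℕ → ℝ≥0∞) :
    ∑' q : ℕ × ℕ, nearInd D q.1 q.2 * f q.1 * g q.2 ≤ (2 * D + 1) * l2Norm f * l2Norm g :=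
  tsum_kernel_mul_le (tsum_nearInd_le D)
    (fun j => by simpa only [nearInd_comm] using tsum_nearInd_le D j) f g

theorem tsum_weight_mul_nearInd_le (D : ℕ) (w x y z : ℕ → ℝ≥0∞) :
    ∑' i, ∑' j, ∑' l, w i * x i * (nearInd D j l * y j * z l) ≤
      (2 * D + 1) * l2Norm w * l2Norm x * l2Norm y * l2Norm z := by
  simp only [ENNReal.tsum_mul_left]
  rw [ENNReal.tsum_mul_right,
    ← ENNReal.tsum_prod' (f := fun q : ℕ × ℕ => nearInd D q.1 q.2 * y q.1 * z q.2)]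
  calc (∑' i, w i * x i) * ∑' q : ℕ × ℕ, nearInd D q.1 q.2 * y q.1 * z q.2
      ≤ (l2Norm w * l2Norm x) * ((2 * D + 1) * l2Norm y * l2Norm z) :=
        mul_le_mul' (tsum_mul_le_l2Norm_mul w x) (tsum_nearInd_mul_le D y z)
    _ = _ := by ring

theorem nearMax_cases {k k₁ k₂ : ℕ} (h : nearMax k k₁ k₂) :
    (min k (min k₁ k₂) = k ∧ |(k₁ : ℤ) - k₂| ≤ 10) ∨
      (min k (min k₁ k₂) = k₁ ∧ |(k : ℤ) - k₂| ≤ 10) ∨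
      (min k (min k₁ k₂) = k₂ ∧ |(k : ℤ) - k₁| ≤ 10) := by
  unfold nearMax at h
  simp only [abs_le]
  omega

def decay (m : ℕ) : ℝ := 1 / ((m : ℝ) + 1) ^ 10

theorem decay_nonneg (m : ℕ) : 0 ≤ decay m := by
  unfold decay
  positivity

theorem summable_decay_sq : Summable fun m => decay m ^ 2 := by
  have h := (summable_nat_add_iff 1).2 (Real.summable_one_div_nat_pow.2 (by norm_num : 1 < 20))
  refine h.congr fun m => ?_
  simp only [decay, div_pow, one_pow, ← pow_mul, Nat.cast_add, Nat.cast_one]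

theorem nearMax_decay_le {k k₁ k₂ : ℕ} (h : nearMax k k₁ k₂) :
    ENNReal.ofReal (decay (min k (min k₁ k₂))) ≤
      ENNReal.ofReal (decay k) * nearInd 10 k₁ k₂ + ENNReal.ofReal (decay k₁) * nearInd 10 k k₂ +
        ENNReal.ofReal (decay k₂) * nearInd 10 k k₁ := by
  rcases nearMax_cases h with ⟨hm, hn⟩ | ⟨hm, hn⟩ | ⟨hm, hn⟩ <;> rw [hm]
  · exact le_add_right (le_add_right (by rw [nearInd, if_pos (by exact_mod_cast hn), mul_one]))
  · exact le_add_right (le_add_left (by rw [nearInd, if_pos (by exact_mod_cast hn), mul_one]))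
  · exact le_add_left (by rw [nearInd, if_pos (by exact_mod_cast hn), mul_one])

theorem ofReal_weighted_le_of_nearMax {k k₁ k₂ : ℕ} (h : nearMax k k₁ k₂) {g A α β γ : ℝ}
    (hg : g ≤ A) (hα : 0 ≤ α) (hβ : 0 ≤ β) (hγ : 0 ≤ γ) :
    ENNReal.ofReal (g * α * β * γ / ((min k (min k₁ k₂) : ℝ) + 1) ^ 10) ≤
      ENNReal.ofReal A * (ENNReal.ofReal α * ENNReal.ofReal β * ENNReal.ofReal γ *
        (ENNReal.ofReal (decay k) * nearInd 10 k₁ k₂ +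
          ENNReal.ofReal (decay k₁) * nearInd 10 k k₂ +
          ENNReal.ofReal (decay k₂) * nearInd 10 k k₁)) := by
  have hαβγ : 0 ≤ α * β * γ := mul_nonneg (mul_nonneg hα hβ) hγ
  calc ENNReal.ofReal (g * α * β * γ / ((min k (min k₁ k₂) : ℝ) + 1) ^ 10)
      ≤ ENNReal.ofReal (A * (α * β * γ * decay (min k (min k₁ k₂)))) := by
        refine ENNReal.ofReal_le_ofReal ?_
        rw [decay, Nat.cast_min, Nat.cast_min, mul_one_div, ← mul_div_assoc, mul_assoc,
          mul_assoc, ← mul_assoc α]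
        gcongr
    _ = ENNReal.ofReal A * (ENNReal.ofReal α * ENNReal.ofReal β * ENNReal.ofReal γ *
          ENNReal.ofReal (decay (min k (min k₁ k₂)))) := by
        rw [ENNReal.ofReal_mul' (mul_nonneg hαβγ (decay_nonneg _)), ENNReal.ofReal_mul hαβγ,
          ENNReal.ofReal_mul (mul_nonneg hα hβ), ENNReal.ofReal_mul hα]
    _ ≤ _ := by
        gcongr
        exact nearMax_decay_le h

theorem tsum_mul_three_weight_nearInd_le (D : ℕ) (w x y z : ℕ → ℝ≥0∞) :
    ∑' p : ℕ × ℕ × ℕ, x p.1 * y p.2.1 * z p.2.2 *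
        (w p.1 * nearInd D p.2.1 p.2.2 + w p.2.1 * nearInd D p.1 p.2.2 +
          w p.2.2 * nearInd D p.1 p.2.1) ≤
      3 * (2 * D + 1) * l2Norm w * l2Norm x * l2Norm y * l2Norm z := by
  have hsplit : ∑' p : ℕ × ℕ × ℕ, x p.1 * y p.2.1 * z p.2.2 *
        (w p.1 * nearInd D p.2.1 p.2.2 + w p.2.1 * nearInd D p.1 p.2.2 +
          w p.2.2 * nearInd D p.1 p.2.1) =
      (∑' i, ∑' j, ∑' l, w i * x i * (nearInd D j l * y j * z l)) +
        (∑' i, ∑' j, ∑' l, w i * y i * (nearInd D j l * x j * z l)) +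
        (∑' i, ∑' j, ∑' l, w i * z i * (nearInd D j l * x j * y l)) := by
    simp only [mul_add, ENNReal.tsum_add, ENNReal.tsum_prod']
    congr 1
    congr 1
    · exact tsum_congr fun i => tsum_congr fun j => tsum_congr fun l => by ring
    · rw [ENNReal.tsum_comm]
      exact tsum_congr fun i => tsum_congr fun j => tsum_congr fun l => by ring
    · conv_lhs => enter [1, k]; rw [ENNReal.tsum_comm]
      rw [ENNReal.tsum_comm]
      exact tsum_congr fun i => tsum_congr fun j => tsum_congr fun l => by ring
  rw [hsplit]
  calc _ ≤ (2 * D + 1) * l2Norm w * l2Norm x * l2Norm y * l2Norm z +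
        (2 * D + 1) * l2Norm w * l2Norm y * l2Norm x * l2Norm z +
        (2 * D + 1) * l2Norm w * l2Norm z * l2Norm x * l2Norm y := by
          gcongr <;> exact tsum_weight_mul_nearInd_le _ _ _ _ _
    _ = _ := by ring

theorem propertyG_of_le {G : ℕ → ℕ → ℕ → ℝ} (A : ℝ)
    (hG : ∀ k k₁ k₂, nearMax k k₁ k₂ → G k k₁ k₂ ≤ A) : propertyG G := by
  refine ⟨A * 63 * √(∑' m, decay m ^ 2), fun a b c ha hb hc sa sb sc => ?_⟩
  calc _ ≤ ∑' p : ℕ × ℕ × ℕ, ENNReal.ofReal A *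
        (ENNReal.ofReal (a p.1) * ENNReal.ofReal (b p.2.1) * ENNReal.ofReal (c p.2.2) *
          (ENNReal.ofReal (decay p.1) * nearInd 10 p.2.1 p.2.2 +
            ENNReal.ofReal (decay p.2.1) * nearInd 10 p.1 p.2.2 +
            ENNReal.ofReal (decay p.2.2) * nearInd 10 p.1 p.2.1)) := by
        refine ENNReal.tsum_le_tsum fun ⟨k, k₁, k₂⟩ => ?_
        split_ifs with h
        · exact ofReal_weighted_le_of_nearMax h (hG k k₁ k₂ h) (ha k) (hb k₁) (hc k₂)
        · exact zero_le
    _ ≤ ENNReal.ofReal A * (3 * (2 * (10 : ℕ) + 1) *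
          l2Norm (fun m => ENNReal.ofReal (decay m)) * l2Norm (fun n => ENNReal.ofReal (a n)) *
          l2Norm (fun n => ENNReal.ofReal (b n)) * l2Norm (fun n => ENNReal.ofReal (c n))) := by
        rw [ENNReal.tsum_mul_left]
        gcongr
        exact tsum_mul_three_weight_nearInd_le _ _ _ _ _
    _ = _ := by
        rw [l2Norm_ofReal decay decay_nonneg summable_decay_sq, l2Norm_ofReal a ha sa,
          l2Norm_ofReal b hb sb, l2Norm_ofReal c hc sc]
        simp only [ENNReal.ofReal_mul' (Real.sqrt_nonneg _)]
        rw [ENNReal.ofReal_mul' (by norm_num : (0 : ℝ) ≤ 63), ENNReal.ofReal_ofNat]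
        push_cast
        ring

theorem le_add_of_nearMax {k k₁ k₂ : ℕ} (h : nearMax k k₁ k₂) (h₁₂ : |(k₁ : ℤ) - k₂| ≤ 10) :
    k ≤ k₁ + 20 := by
  unfold nearMax at h
  rw [abs_le] at h₁₂
  omega

theorem Gwt1_le {r r₀ : ℝ} (hr : 1 / 2 ≤ r) (hr₀ : 1 ≤ r₀) {k k₁ k₂ : ℕ}
    (h : nearMax k k₁ k₂) : Gwt1 r r₀ k k₁ k₂ ≤ 1 + 1 + 2 ^ (20 * max (r + 1 / 2 - r₀) 0) := by
  have hk : (0 : ℝ) ≤ k := k.cast_nonneg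
  have hk₁ : (0 : ℝ) ≤ k₁ := k₁.cast_nonneg
  have hk₂ : (0 : ℝ) ≤ k₂ := k₂.cast_nonneg
  have hone {e : ℝ} (he : e ≤ 0) : (2 : ℝ) ^ e ≤ 1 :=
    Real.rpow_le_one_of_one_le_of_nonpos one_le_two he
  unfold Gwt1
  simp only [← Real.rpow_add two_pos]
  refine add_le_add (add_le_add ?_ ?_) ?_ <;> split_ifs with hnear
  · exact hone (by nlinarith [mul_nonneg (sub_nonneg.2 hr) hk₁, mul_nonneg (sub_nonneg.2 hr₀) hk])
  · exact zero_le_one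
  · exact hone (by nlinarith [mul_nonneg (sub_nonneg.2 hr) hk₂, mul_nonneg (sub_nonneg.2 hr₀) hk])
  · exact zero_le_one
  · set M := max (r + 1 / 2 - r₀) 0
    have hkk₁ : (k : ℝ) ≤ k₁ + 20 := by exact_mod_cast le_add_of_nearMax h hnear
    have hM : 1 - 2 * r + M ≤ 0 := by
      have := max_le (by linarith : r + 1 / 2 - r₀ ≤ 2 * r - 1) (by linarith : (0 : ℝ) ≤ 2 * r - 1)
      linarith
    refine Real.rpow_le_rpow_of_exponent_le one_le_two ?_
    nlinarith [mul_le_mul_of_nonneg_right (le_max_left (r + 1 / 2 - r₀) 0) hk,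
      mul_le_mul_of_nonneg_left hkk₁ (le_max_right (r + 1 / 2 - r₀) 0),
      mul_nonpos_of_nonpos_of_nonneg hM hk₁]
  · positivity

theorem stmt18 (r r₀ : ℝ) (hr : 1 / 2 ≤ r) (hr₀ : 1 ≤ r₀) :
    propertyG (Gwt1 r r₀) :=
  propertyG_of_le _ fun _ _ _ h => Gwt1_le hr hr₀ h
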